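/- arXiv:math/9903058 — 2 statements merged into one kernel-verified Lean document; each statement's English description precedes it below -/
import Mathlib

section
/- Let R be a noetherian local ring with maximal ideal m, M a finitely generated R-module, and N ⊆ M a submodule. Elements m₁,…,m_t generating N form a standard basis for N (i.e. the initial forms in(m₁),…,in(m_t) generate the associated graded submodule G(m, N ⊆ M) = ⊕_{i≥0} (mⁱM ∩ N + mⁱ⁺¹M)/mⁱ⁺¹M inside G(m,M)) if and only if for every z ∈ N there exist a₁,…,a_t ∈ R with z = a₁m₁ + ⋯ + a_t m_t and ord(z) ≤ ord(a_i) + ord(m_i) for all i (where ord denotes the m-adic order). -/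
open IsLocalRing Submodule

/-!
If `n = ord z`, the order condition says exactly that `z` lies in `P = Σᵢ m^(n - dᵢ) vᵢ`.
Lifting initial forms one degree at a time, the standard basis property puts `z` into
`P + mᵏM` for every `k`. Submodules of a finitely generated module over a noetherian local
ring are closed in the `m`-adic topology (Krull's intersection theorem applied to `M ⧸ P`),
so `z ∈ P`. Conversely, a representation satisfying the order condition has its coefficients
in the right powers of `m` and leaves remainder `0`.
-/

/-- The `m`-adic order `ord(m, M)(z) = sup {n : z ∈ mⁿM}` (valued in `ℕ∞`). -/
noncomputable def mord (R : Type*) {M : Type*} [CommRing R] [IsLocalRing R]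
    [AddCommGroup M] [Module R M] (z : M) : ℕ∞ :=
  sSup ((fun n : ℕ => (n : ℕ∞)) ''
    {n : ℕ | z ∈ (maximalIdeal R) ^ n • (⊤ : Submodule R M)})

lemma mem_iSup_smul_span_singleton_iff {R M ι : Type*} [CommSemiring R] [AddCommMonoid M]
    [Module R M] [Fintype ι] (I : ι → Ideal R) (v : ι → M) (x : M) :
    x ∈ ⨆ i, I i • span R {v i} ↔ ∃ a : ι → R, (∀ i, a i ∈ I i) ∧ ∑ i, a i • v i = x := by
  constructor
  · intro hx
    obtain ⟨f, hf, rfl⟩ := (mem_iSup_iff_exists_finsupp _ x).1 hx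
    choose a ha hav using fun i => mem_smul_span_singleton.1 (hf i)
    exact ⟨a, ha, by rw [Finsupp.sum_fintype _ _ fun _ => rfl]; simp only [hav]⟩
  · rintro ⟨a, ha, rfl⟩
    exact sum_mem fun i _ => mem_iSup_of_mem i (smul_mem_smul (ha i) (mem_span_singleton_self _))

section

variable {R M : Type*} [CommRing R] [IsLocalRing R] [AddCommGroup M] [Module R M]

lemma natCast_le_mord_iff (z : M) (n : ℕ) :
    (n : ℕ∞) ≤ mord R z ↔ z ∈ maximalIdeal R ^ n • (⊤ : Submodule R M) := by
  refine ⟨fun h => ?_, fun h => le_sSup ⟨n, h, rfl⟩⟩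
  cases n with
  | zero => simp
  | succ k =>
    obtain ⟨_, ⟨j, hj, rfl⟩, hkj⟩ :=
      lt_sSup_iff.1 ((ENat.add_one_le_iff (ENat.natCast_ne_top k)).1 (by exact_mod_cast h))
    exact pow_smul_top_le _ _ (Nat.cast_lt.1 hkj) hj

lemma mord_zero : mord R (0 : M) = ⊤ :=
  ENat.eq_top_iff_forall_ge.2 fun n => (natCast_le_mord_iff _ n).2 (zero_mem _)

lemma mem_pow_sub_iff_le_mord_add (a : R) (n d : ℕ) :
    a ∈ maximalIdeal R ^ (n - d) ↔ (n : ℕ∞) ≤ mord R a + d := by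
  rw [← tsub_le_iff_right, ← ENat.natCast_sub, natCast_le_mord_iff, smul_eq_mul, Ideal.mul_top]

lemma mem_of_forall_mem_sup_pow_smul_top [IsNoetherianRing R] [Module.Finite R M]
    {I : Ideal R} (hI : I ≠ ⊤) {P : Submodule R M} {z : M}
    (h : ∀ k : ℕ, z ∈ P ⊔ I ^ k • ⊤) : z ∈ P := by
  have hz : P.mkQ z ∈ (⨅ k : ℕ, I ^ k • ⊤ : Submodule R (M ⧸ P)) := by
    refine mem_iInf _ |>.2 fun k => ?_
    rw [← mem_comap, comap_smul_top_of_surjective _ _ P.mkQ_surjective, ker_mkQ, sup_comm]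
    exact h k
  rwa [Ideal.iInf_pow_smul_eq_bot_of_isLocalRing _ hI, mem_bot, mkQ_apply,
    Quotient.mk_eq_zero] at hz

lemma eq_zero_of_mord_eq_top [IsNoetherianRing R] [Module.Finite R M] {z : M}
    (h : mord R z = ⊤) : z = 0 :=
  mem_bot R |>.1 <| mem_of_forall_mem_sup_pow_smul_top (maximalIdeal.isMaximal R).ne_top
    fun k => by rw [bot_sup_eq, ← natCast_le_mord_iff, h]; exact le_top

/-- `v` is a standard basis of `N` with respect to the weights `d`: the initial forms of the
`v i`, placed in degree `d i`, generate `G(m, N ⊆ M)` in every degree `n`. -/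
def IsStandardBasis {ι : Type*} [Fintype ι] (N : Submodule R M) (v : ι → M) (d : ι → ℕ) :
    Prop :=
  ∀ n : ℕ, ∀ z ∈ (maximalIdeal R ^ n • (⊤ : Submodule R M)) ⊓ N,
    ∃ a : ι → R, (∀ i, a i ∈ maximalIdeal R ^ (n - d i)) ∧
      z - ∑ i, a i • v i ∈ maximalIdeal R ^ (n + 1) • (⊤ : Submodule R M)

namespace IsStandardBasis

variable {ι : Type*} [Fintype ι] {N : Submodule R M} {v : ι → M} {d : ι → ℕ}

lemma exists_sub_mem_pow_smul_top (H : IsStandardBasis N v d) (hvN : ∀ i, v i ∈ N) {n : ℕ}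
    {z : M} (hz : z ∈ (maximalIdeal R ^ n • (⊤ : Submodule R M)) ⊓ N) (k : ℕ) :
    ∃ p ∈ ⨆ i, maximalIdeal R ^ (n - d i) • span R {v i},
      z - p ∈ (maximalIdeal R ^ (n + k) • (⊤ : Submodule R M)) ⊓ N := by
  induction k with
  | zero => exact ⟨0, zero_mem _, by simpa using hz⟩
  | succ k ih =>
    obtain ⟨p, hp, hzp⟩ := ih
    obtain ⟨a, ha, hrem⟩ := H (n + k) (z - p) hzp
    have hsum : ∑ i, a i • v i ∈ ⨆ i, maximalIdeal R ^ (n - d i) • span R {v i} :=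
      (mem_iSup_smul_span_singleton_iff _ v _).2
        ⟨a, fun i => Ideal.pow_le_pow_right (by omega) (ha i), rfl⟩
    refine ⟨p + ∑ i, a i • v i, add_mem hp hsum, ?_, ?_⟩ <;> rw [← sub_sub]
    · exact hrem
    · exact sub_mem hzp.2 (sum_mem fun i _ => smul_mem _ _ (hvN i))

lemma mem_iSup_pow_smul_span [IsNoetherianRing R] [Module.Finite R M]
    (H : IsStandardBasis N v d) (hvN : ∀ i, v i ∈ N) {n : ℕ} {z : M}
    (hz : z ∈ (maximalIdeal R ^ n • (⊤ : Submodule R M)) ⊓ N) :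
    z ∈ ⨆ i, maximalIdeal R ^ (n - d i) • span R {v i} := by
  refine mem_of_forall_mem_sup_pow_smul_top (maximalIdeal.isMaximal R).ne_top fun k => ?_
  obtain ⟨p, hp, hzp, -⟩ := H.exists_sub_mem_pow_smul_top hvN hz k
  exact mem_sup.2 ⟨p, hp, z - p, pow_smul_top_le _ _ (Nat.le_add_left k n) hzp, add_sub_cancel _ _⟩

end IsStandardBasis

end

theorem standard_basis_criterion_general
    {R M : Type*} [CommRing R] [IsNoetherianRing R] [IsLocalRing R]
    [AddCommGroup M] [Module R M] [Module.Finite R M]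
    (N : Submodule R M) {t : ℕ} (v : Fin t → M)
    (hvN : ∀ i, v i ∈ N)
    (d : Fin t → ℕ) (hd : ∀ i, (d i : ℕ∞) = mord R (v i)) :
    (∀ n : ℕ, ∀ z ∈ ((maximalIdeal R) ^ n • (⊤ : Submodule R M)) ⊓ N,
        ∃ a : Fin t → R, (∀ i, a i ∈ (maximalIdeal R) ^ (n - d i)) ∧
          z - ∑ i, a i • v i ∈ (maximalIdeal R) ^ (n + 1) • (⊤ : Submodule R M))
      ↔ (∀ z ∈ N, ∃ a : Fin t → R, z = ∑ i, a i • v i ∧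
          ∀ i, mord R z ≤ mord R (a i) + mord R (v i)) := by
  refine ⟨fun H z hzN => ?_, fun H n z ⟨hzn, hzN⟩ => ?_⟩
  · cases hz : mord R z with
    | top => exact ⟨0, by simp [eq_zero_of_mord_eq_top hz], fun i => by simp [mord_zero]⟩
    | coe n =>
      have hzn := (natCast_le_mord_iff z n).1 hz.ge
      obtain ⟨a, ha, rfl⟩ := (mem_iSup_smul_span_singleton_iff _ v z).1
        (IsStandardBasis.mem_iSup_pow_smul_span H hvN ⟨hzn, hzN⟩)
      exact ⟨a, rfl, fun i => by rw [← hd i]; exact (mem_pow_sub_iff_le_mord_add _ _ _).1 (ha i)⟩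
  · obtain ⟨a, rfl, hord⟩ := H z hzN
    refine ⟨a, fun i => (mem_pow_sub_iff_le_mord_add _ _ _).2 ?_, by simp⟩
    rw [hd i]
    exact ((natCast_le_mord_iff _ n).2 hzn).trans (hord i)

/-- for a noetherian local ring `(R, m)`, a finitely generated module `M`, a
submodule `N ⊆ M` and generators `v 1, …, v t` of `N` with `d i = ord(v i)`, the family `v`
is a standard basis for `N` — i.e. the initial forms `in(v i)` generate the graded submodule
`G(m, N ⊆ M) = ⊕ (mⁿM ∩ N + mⁿ⁺¹M)/mⁿ⁺¹M` of `G(m, M)`, which amounts to: every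
`z ∈ mⁿM ∩ N` is congruent mod `mⁿ⁺¹M` to a combination `Σ aᵢ • vᵢ` with `aᵢ ∈ m^(n - dᵢ)` —
if and only if every `z ∈ N` can be written `z = Σ aᵢ • vᵢ` with
`ord z ≤ ord aᵢ + ord vᵢ` for all `i`. -/
theorem standard_basis_criterion
    {R M : Type*} [CommRing R] [IsNoetherianRing R] [IsLocalRing R]
    [AddCommGroup M] [Module R M] [Module.Finite R M]
    (N : Submodule R M) {t : ℕ} (v : Fin t → M)
    (hvN : ∀ i, v i ∈ N)
    (hgen : Submodule.span R (Set.range v) = N)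
    (d : Fin t → ℕ) (hd : ∀ i, (d i : ℕ∞) = mord R (v i)) :
    (∀ n : ℕ, ∀ z ∈ ((maximalIdeal R) ^ n • (⊤ : Submodule R M)) ⊓ N,
        ∃ a : Fin t → R, (∀ i, a i ∈ (maximalIdeal R) ^ (n - d i)) ∧
          z - ∑ i, a i • v i ∈ (maximalIdeal R) ^ (n + 1) • (⊤ : Submodule R M))
      ↔ (∀ z ∈ N, ∃ a : Fin t → R, z = ∑ i, a i • v i ∧
          ∀ i, mord R z ≤ mord R (a i) + mord R (v i)) :=
  standard_basis_criterion_general N v hvN d hd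
end

section
/- Let P be a ring, x ∈ P a non-zerodivisor, S₀ a submodule of a module S such that x²·S₀ ⊆ x·S, and suppose R ≅ x·S and R₀ ≅ x²·S₀ under a fixed isomorphism. Then the kernel of the restriction map Hom(x·S, B) → Hom(x²·S₀, B) is naturally isomorphic to Hom(S/S₀, B) for any module B on which x acts as a non-zerodivisor. -/
/-!
Multiplication by `x` identifies `S` with `x • S`, carrying `x • S₀` onto `x² • S₀`. So a map
`f : x • S → B` kills `x² • S₀` iff `f ∘ (x • ·)` kills `x • S₀`, iff it kills `S₀`, as `x` is a
non-zerodivisor on `B`. Hence `g ↦ g ∘ mkQ ∘ (x • ·)⁻¹` maps `Hom(S ⧸ S₀, B)` injectively onto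
the kernel of the restriction to `x² • S₀`.
-/

open Pointwise

noncomputable def Function.Exact.kerEquivOfInjective {R M N P : Type*} [Semiring R]
    [AddCommMonoid M] [AddCommMonoid N] [AddCommMonoid P] [Module R M] [Module R N] [Module R P]
    {f : M →ₗ[R] N} {g : N →ₗ[R] P} (h : Function.Exact f g) (hf : Function.Injective f) :
    LinearMap.ker g ≃ₗ[R] M :=
  ((LinearEquiv.ofInjective f hf).trans (LinearEquiv.ofEq _ _ h.linearMap_ker_eq.symm)).symm

namespace Submodule

variable {R S : Type*} [CommRing R] [AddCommGroup S] [Module R S]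

theorem mem_ideal_span_singleton_smul_iff {r : R} {N : Submodule R S} {m : S} :
    m ∈ (Ideal.span {r} : Ideal R) • N ↔ ∃ n ∈ N, r • n = m := by
  rw [ideal_span_singleton_smul, mem_smul_pointwise_iff_exists]

noncomputable def smulEquivSpanSingletonSMulTop {x : R} (hx : IsSMulRegular S x) :
    S ≃ₗ[R] ((Ideal.span {x} : Ideal R) • (⊤ : Submodule R S) :) :=
  (LinearEquiv.ofInjective (DistribSMul.toLinearMap R S x) hx).trans <|
    LinearEquiv.ofEq _ _ <| by
      rw [LinearMap.range_eq_map, ideal_span_singleton_smul, pointwise_smul_def]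

@[simp]
theorem coe_smulEquivSpanSingletonSMulTop_apply {x : R} (hx : IsSMulRegular S x) (s : S) :
    (smulEquivSpanSingletonSMulTop hx s : S) = x • s :=
  rfl

variable {B : Type*} [AddCommGroup B] [Module R B]

theorem exact_lcomp_mkQ_comp_smulEquiv_symm_lcomp_inclusion {x : R} (S0 : Submodule R S)
    (hxS : IsSMulRegular S x) (hxB : IsSMulRegular B x)
    (hle : (Ideal.span {x ^ 2} : Ideal R) • S0 ≤ (Ideal.span {x} : Ideal R) • ⊤) :
    Function.Exact
      (LinearMap.lcomp R B (S0.mkQ ∘ₗ (smulEquivSpanSingletonSMulTop hxS).symm.toLinearMap))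
      (LinearMap.lcomp R B (inclusion hle)) := by
  set e := smulEquivSpanSingletonSMulTop hxS
  intro f
  simp only [LinearMap.lcomp_apply', Set.mem_range]
  constructor
  · intro hf
    have hS0 : S0 ≤ LinearMap.ker (f ∘ₗ e.toLinearMap) := by
      intro s hs
      have hx2 : x ^ 2 • s ∈ (Ideal.span {x ^ 2} : Ideal R) • S0 :=
        mem_ideal_span_singleton_smul_iff.2 ⟨s, hs, rfl⟩
      have hfx : x • (f ∘ₗ e.toLinearMap) s = f (inclusion hle ⟨_, hx2⟩) := by
        rw [← map_smul, LinearMap.comp_apply]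
        refine congrArg f (Subtype.ext ?_)
        simp [e, pow_two, mul_smul]
      exact hxB.right_eq_zero_of_smul <| by
        rw [hfx, ← LinearMap.comp_apply, hf, LinearMap.zero_apply]
    refine ⟨S0.liftQ _ hS0, ?_⟩
    ext m
    simp
  · rintro ⟨h, rfl⟩
    ext ⟨n, hn⟩
    obtain ⟨s, hs, rfl⟩ := mem_ideal_span_singleton_smul_iff.1 hn
    have he : e.symm ⟨x ^ 2 • s, hle hn⟩ = x • s := by
      rw [LinearEquiv.symm_apply_eq]
      ext
      simp [e, pow_two, mul_smul]
    change h (S0.mkQ (e.symm (inclusion hle ⟨_, hn⟩))) = 0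
    rw [inclusion_apply, he, mkQ_apply, (Quotient.mk_eq_zero S0).2 (S0.smul_mem x hs), map_zero]

end Submodule

/-- let `x` be a non-zerodivisor on a module `S` and on a module `B`
(over a ring `R`), and let `S₀ ⊆ S` be a submodule.  Identify `x·S` with the
submodule `(x)·S ⊆ S` and `x²·S₀` with `(x²)·S₀ ⊆ x·S`.  Then the kernel of the
restriction map `Hom(x·S, B) → Hom(x²·S₀, B)` is naturally isomorphic to
`Hom(S/S₀, B)`. -/
theorem ker_restriction_iso
    {R : Type*} [CommRing R] (x : R)
    {S B : Type*} [AddCommGroup S] [Module R S] [AddCommGroup B] [Module R B]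
    (S0 : Submodule R S)
    (hxS : ∀ s : S, x • s = 0 → s = 0)
    (hxB : ∀ b : B, x • b = 0 → b = 0)
    (hle : (Ideal.span {x ^ 2} : Ideal R) • S0
        ≤ (Ideal.span {x} : Ideal R) • (⊤ : Submodule R S)) :
    Nonempty
      ((LinearMap.ker (LinearMap.lcomp R B (Submodule.inclusion hle)))
        ≃ₗ[R] ((S ⧸ S0) →ₗ[R] B)) := by
  have hxS' : IsSMulRegular S x := .of_right_eq_zero_of_smul hxS
  have hsurj : Function.Surjective
      (S0.mkQ ∘ₗ (Submodule.smulEquivSpanSingletonSMulTop hxS').symm.toLinearMap) :=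
    S0.mkQ_surjective.comp (LinearEquiv.surjective _)
  exact ⟨(S0.exact_lcomp_mkQ_comp_smulEquiv_symm_lcomp_inclusion hxS'
    (.of_right_eq_zero_of_smul hxB) hle).kerEquivOfInjective
      (LinearMap.lcomp_injective_of_surjective _ hsurj)⟩
end
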